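/- The map P from edge binary lists to sign vectors, P : {0,1}^{C(n,2)} → {-1,1}^{2^n}, defined by (P(b))_i = ∏_{edges e=(p,q)} (-1)^{b_e · x_p(i) · x_q(i)} where x_j(i) is the j-th binary digit of i, is an injective group homomorphism from ({0,1}^{C(n,2)}, ⊕) to ({-1,1}^{2^n}, ⊙). -/
import Mathlib


/-- The map `P` from edge binary lists (a simple graph on `n` ordered vertices is
encoded by `b`, with `b e = true` iff the pair `e = (p,q)`, `p < q`, is an edge)
to sign vectors of length `2^n`:
`(P(b))_i = ∏_{e=(p,q)} (-1)^{b_e · x_p(i) · x_q(i)}` where `x_j(i)` is the `j`-th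
binary digit of `i`. -/
def Pfun (n : ℕ) (b : {e : Fin n × Fin n // e.1 < e.2} → Bool) : Fin (2 ^ n) → ℤ :=
  fun i => ∏ e : {e : Fin n × Fin n // e.1 < e.2},
    if b e = true ∧ Nat.testBit i.val e.val.1.val ∧ Nat.testBit i.val e.val.2.val
    then -1 else 1

lemma Pfun_key (n : ℕ) (b : {e : Fin n × Fin n // e.1 < e.2} → Bool)
    (e : {e : Fin n × Fin n // e.1 < e.2}) :
    Pfun n b ⟨2 ^ e.val.1.val ||| 2 ^ e.val.2.val,
      Nat.or_lt_two_pow (Nat.pow_lt_pow_right one_lt_two e.val.1.isLt)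
        (Nat.pow_lt_pow_right one_lt_two e.val.2.isLt)⟩
      = if b e then -1 else 1 := by
  unfold Pfun
  rw [show (if b e then (-1 : ℤ) else 1)
      = ∏ e' : {e : Fin n × Fin n // e.1 < e.2}, if e' = e then (if b e then -1 else 1) else 1 by
    simp]
  apply Finset.prod_congr rfl
  intro e' _
  have hbit : ∀ j : ℕ, Nat.testBit (2 ^ e.val.1.val ||| 2 ^ e.val.2.val) j
      ↔ (j = e.val.1.val ∨ j = e.val.2.val) := by
    intro j
    simp only [Nat.testBit_or, Bool.or_eq_true, Nat.testBit_two_pow, decide_eq_true_eq]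
    tauto
  by_cases he : e' = e
  · subst he
    have h1 := (hbit e'.val.1.val).mpr (Or.inl rfl)
    have h2 := (hbit e'.val.2.val).mpr (Or.inr rfl)
    simp [h1, h2]
  · simp only [if_neg he]
    rw [if_neg]
    rintro ⟨hb, h1, h2⟩
    rw [hbit] at h1 h2
    have hlt := e'.prop
    have hlt2 := e.prop
    apply he
    rcases h1 with h1 | h1 <;> rcases h2 with h2 | h2
    · exfalso; omega
    · have : e'.val = e.val := Prod.ext (Fin.ext h1) (Fin.ext h2)
      exact Subtype.ext this
    · exfalso
      have : (e.val.2 : ℕ) < (e.val.1 : ℕ) := by omega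
      omega
    · exfalso; omega

/-- `P` is an injective group homomorphism from `({0,1}^{C(n,2)}, ⊕)` (pointwise
mod-2 addition) to `({-1,1}^{2^n}, ⊙)` (pointwise multiplication). -/
theorem stmt8 (n : ℕ) :
    (∀ b b' : {e : Fin n × Fin n // e.1 < e.2} → Bool,
        Pfun n (fun e => xor (b e) (b' e)) = fun i => Pfun n b i * Pfun n b' i)
      ∧ Function.Injective (Pfun n) := by
  constructor
  · intro b b'
    funext i
    unfold Pfun
    rw [← Finset.prod_mul_distrib]
    apply Finset.prod_congr rfl
    intro e _
    cases hb : b e <;> cases hb' : b' e <;>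
      by_cases h1 : Nat.testBit i.val e.val.1.val <;>
      by_cases h2 : Nat.testBit i.val e.val.2.val <;>
      simp [hb, hb', h1, h2]
  · intro b b' h
    funext e
    have := congrFun h ⟨2 ^ e.val.1.val ||| 2 ^ e.val.2.val,
      Nat.or_lt_two_pow (Nat.pow_lt_pow_right one_lt_two e.val.1.isLt)
        (Nat.pow_lt_pow_right one_lt_two e.val.2.isLt)⟩
    rw [Pfun_key, Pfun_key] at this
    cases hb : b e <;> cases hb' : b' e <;> simp [hb, hb'] at this ⊢
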